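/- arXiv:1307.4007 — 2 statements merged into one kernel-verified Lean document; each statement's English description precedes it below -/
import Mathlib

section
/- For every odd online semimeasure Q_odd and every even online semimeasure Q_even, at least one of the following holds: Q_odd(00)·Q_even(00) ≤ 1/4, or Q_odd(01)·Q_even(01) ≤ 1/2, or Q_odd(11)·Q_even(11) ≤ 1/2. -/
open scoped Classical

abbrev BStr := List Bool

/-- Conditional plain Kolmogorov complexity w.r.t. machine `U`. -/
noncomputable def condC (U : BStr × BStr →. BStr) (x y : BStr) : ℕ :=
  sInf {n | ∃ p : BStr, p.length = n ∧ x ∈ U (p, y)}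

noncomputable def plainC (U : BStr × BStr →. BStr) (x : BStr) : ℕ := condC U x []

def OptimalU (U : BStr × BStr →. BStr) : Prop :=
  Partrec U ∧ ∀ V : BStr × BStr →. BStr, Partrec V →
    ∃ c : ℕ, ∀ x y p : BStr, x ∈ V (p, y) → condC U x y ≤ p.length + c

def OnlineProg (good : ℕ → Prop) (V : BStr × BStr →. Bool) (p z : BStr) : Prop :=
  ∀ j : Fin z.length, good (j.val + 1) → z.get j ∈ V (p, z.take j.val)

noncomputable def onlineC (good : ℕ → Prop) (V : BStr × BStr →. Bool) (z : BStr) : ℕ :=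
  sInf {n | ∃ p : BStr, p.length = n ∧ OnlineProg good V p z}

def OnlineOptimal (good : ℕ → Prop) (V : BStr × BStr →. Bool) : Prop :=
  Partrec V ∧ ∀ W : BStr × BStr →. Bool, Partrec W →
    ∃ c : ℕ, ∀ z p : BStr, OnlineProg good W p z → onlineC good V z ≤ p.length + c

def evenIdx (i : ℕ) : Prop := i % 2 = 0
def oddIdx (i : ℕ) : Prop := i % 2 = 1

def pref (ω : ℕ → Bool) (n : ℕ) : BStr := (List.range n).map ω

def swapPairs (ω : ℕ → Bool) : ℕ → Bool :=
  fun j => if j % 2 = 0 then ω (j + 1) else ω (j - 1)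

def Semimeasure (P : BStr → ℝ) : Prop :=
  (∀ x, 0 ≤ P x) ∧ P [] ≤ 1 ∧
  ∀ x : BStr, P (x ++ [false]) + P (x ++ [true]) ≤ P x

def EvenSemimeasure (P : BStr → ℝ) : Prop :=
  (∀ x, 0 ≤ P x) ∧ P [] ≤ 1 ∧
  (∀ x : BStr, (x.length + 1) % 2 = 0 → P (x ++ [false]) + P (x ++ [true]) ≤ P x) ∧
  (∀ x : BStr, (x.length + 1) % 2 = 1 → P (x ++ [false]) = P x ∧ P (x ++ [true]) = P x)

def OddSemimeasure (P : BStr → ℝ) : Prop :=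
  (∀ x, 0 ≤ P x) ∧ P [] ≤ 1 ∧
  (∀ x : BStr, (x.length + 1) % 2 = 1 → P (x ++ [false]) + P (x ++ [true]) ≤ P x) ∧
  (∀ x : BStr, (x.length + 1) % 2 = 0 → P (x ++ [false]) = P x ∧ P (x ++ [true]) = P x)

def LowerSemicomputable (f : BStr → ℝ) : Prop :=
  ∃ g : ℕ → BStr → ℚ,
    Computable (fun q : ℕ × BStr => g q.1 q.2) ∧
    (∀ x, Monotone fun t => g t x) ∧
    (∀ x, IsLUB (Set.range fun t => ((g t x : ℝ))) (f x))


/-- For every odd online semimeasure Q_odd and even online semimeasure Q_even: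
Q_odd(00)·Q_even(00) ≤ 1/4, or Q_odd(01)·Q_even(01) ≤ 1/2, or Q_odd(11)·Q_even(11) ≤ 1/2. -/
theorem stmt18 (Qodd Qev : BStr → ℝ)
    (hQodd : OddSemimeasure Qodd) (hQev : EvenSemimeasure Qev) :
    Qodd [false, false] * Qev [false, false] ≤ 1 / 4 ∨
    Qodd [false, true] * Qev [false, true] ≤ 1 / 2 ∨
    Qodd [true, true] * Qev [true, true] ≤ 1 / 2 := by
  obtain ⟨hOpos, hO1, hOsum, hOeq⟩ := hQodd
  obtain ⟨hEpos, hE1, hEsum, hEeq⟩ := hQev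
  have h1 : Qodd [false] + Qodd [true] ≤ Qodd [] := by
    have := hOsum [] (by norm_num); simpa using this
  have h2 : Qodd [false, false] = Qodd [false] := by
    have := (hOeq [false] (by norm_num)).1; simpa using this
  have h3 : Qodd [false, true] = Qodd [false] := by
    have := (hOeq [false] (by norm_num)).2; simpa using this
  have h4 : Qodd [true, true] = Qodd [true] := by
    have := (hOeq [true] (by norm_num)).2; simpa using this
  have h5 : Qev [false] = Qev [] := by
    have := (hEeq [] (by norm_num)).1; simpa using this
  have h6 : Qev [true] = Qev [] := by
    have := (hEeq [] (by norm_num)).2; simpa using this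
  have h7 : Qev [false, false] + Qev [false, true] ≤ Qev [false] := by
    have := hEsum [false] (by norm_num); simpa using this
  have h8 : Qev [true, false] + Qev [true, true] ≤ Qev [true] := by
    have := hEsum [true] (by norm_num); simpa using this
  by_contra hc
  push_neg at hc
  obtain ⟨c1, c2, c3⟩ := hc
  have p1 := hEpos [true, false]
  have p2 := hEpos [false, false]
  have p3 := hOpos [false]
  have p4 := hOpos [true]
  nlinarith [hEpos [false, true], hEpos [true, true]]
end

section
/- For every odd online semimeasure Q_odd and every even online semimeasure Q_even, at least one of the following holds: Q_odd(00)·Q_even(00) ≤ 1/9, or Q_odd(10)·Q_even(10) ≤ 1/9, or Q_odd(01)·Q_even(01) ≤ 4/9, or Q_odd(11)·Q_even(11) ≤ 4/9. -/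
open scoped Classical

/-- For every odd online semimeasure Q_odd and even online semimeasure Q_even:
Q_odd(00)·Q_even(00) ≤ 1/9, or Q_odd(10)·Q_even(10) ≤ 1/9, or Q_odd(01)·Q_even(01) ≤ 4/9, or
Q_odd(11)·Q_even(11) ≤ 4/9. -/
theorem stmt19 (Qodd Qev : BStr → ℝ)
    (hQodd : OddSemimeasure Qodd) (hQev : EvenSemimeasure Qev) :
    Qodd [false, false] * Qev [false, false] ≤ 1 / 9 ∨
    Qodd [true, false] * Qev [true, false] ≤ 1 / 9 ∨
    Qodd [false, true] * Qev [false, true] ≤ 4 / 9 ∨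
    Qodd [true, true] * Qev [true, true] ≤ 4 / 9 := by
  obtain ⟨honn, ho1, hosum, hoeq⟩ := hQodd
  obtain ⟨henn, he1, hesum, heeq⟩ := hQev
  by_contra h
  push_neg at h
  obtain ⟨h00, h10, h01, h11⟩ := h
  have ho : Qodd ([] ++ [false]) + Qodd ([] ++ [true]) ≤ Qodd [] := hosum [] rfl
  have ho00 := (hoeq [false] rfl).1
  have ho01 := (hoeq [false] rfl).2
  have ho10 := (hoeq [true] rfl).1
  have ho11 := (hoeq [true] rfl).2
  have he0 := hesum [false] rfl
  have he1' := hesum [true] rfl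
  have hef := (heeq [] rfl).1
  have het := (heeq [] rfl).2
  simp only [List.nil_append, List.cons_append, List.nil_append] at *
  have hnn0 := honn [false]
  have hnn1 := honn [true]
  have hu0 := henn [false, false]
  have hu1 := henn [false, true]
  have hv0 := henn [true, false]
  have hv1 := henn [true, true]
  -- a = Qodd [false], b = Qodd [true]
  rw [ho00] at h00; rw [ho01] at h01; rw [ho10] at h10; rw [ho11] at h11
  nlinarith [mul_le_mul_of_nonneg_left he0 hnn0, mul_le_mul_of_nonneg_left he1' hnn1,
    mul_nonneg hnn0 hu0, mul_nonneg hnn1 hv0]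
end
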